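/- Let l be a natural number, γ ∈ [0,1], and x ∈ [−1,1]. Let P_l denote the l-th Legendre polynomial, defined by Rodrigues' formula P_l(x) = (1/(2^l · l!)) · d^l/dx^l (x² − 1)^l. Then |1 − P_l(x)| ≤ 2 · |1 − x|^γ · (l(l+1))^γ. -/

import Mathlib

open Real

/-- The `l`-th Legendre polynomial on `ℝ`, via Rodrigues' formula
`P_l(x) = (1/(2^l l!)) dˡ/dxˡ (x² − 1)ˡ`. -/
noncomputable def legendreP (l : ℕ) (x : ℝ) : ℝ :=
  (1 / (2^l * (Nat.factorial l : ℝ))) * iteratedDeriv l (fun y : ℝ => (y^2 - 1)^l) x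

/-!
Write `P = P_l` and `λ = l(l+1)`. Rodrigues' formula gives Legendre's equation
`(1 - x²) P'' = 2x P' - λ P`, and differentiating it, `(1 - x²) P''' = 4x P'' - (λ - 2) P'`.
If `(1 - x²) y'' = a x y' - μ y` with `a ≥ 1` and `μ > 0`, the energy `μ y² + (1 - x²) y'²` has
derivative `2(a - 1) x y'²`, so on `[-1, 1]` it is largest at `±1`, where it equals `μ y²`; hence
`|y| ≤ max |y(±1)|`. Since `P(±1) = (±1)ˡ`, and the equation at `±1` gives `|P'(±1)| = λ/2`, this
yields `|P| ≤ 1` and (for `l ≥ 2`) `|P'| ≤ λ/2`. Thus `|1 - P(x)|` is at most `2` and, by the mean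
value theorem, at most `λ(1 - x)/2`; interpolate with `min 1 t ≤ t^γ` for `t = λ(1 - x)`.
-/

open Polynomial Set
open scoped Nat

section CommRing

variable {R : Type*} [CommRing R]

theorem iterate_derivative_succ_X_mul (n : ℕ) (p : R[X]) :
    derivative^[n + 1] (X * p) = X * derivative^[n + 1] p + C ((n : R) + 1) * derivative^[n] p := by
  rw [mul_comm X, iterate_derivative_mul_X, Nat.add_sub_cancel, nsmul_eq_mul]
  simp only [map_add, map_natCast, map_one, Nat.cast_add, Nat.cast_one]
  ring

theorem iterate_derivative_X_sq_sub_one_mul (n : ℕ) (p : R[X]) :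
    derivative^[n + 2] ((X ^ 2 - 1) * p) = (X ^ 2 - 1) * derivative^[n + 2] p
      + C (2 * ((n : R) + 2)) * X * derivative^[n + 1] p
      + C (((n : R) + 2) * ((n : R) + 1)) * derivative^[n] p := by
  rw [show (X ^ 2 - 1) * p = X * (X * p) - p by ring, iterate_derivative_sub,
    iterate_derivative_succ_X_mul (n + 1), iterate_derivative_succ_X_mul (n + 1),
    iterate_derivative_succ_X_mul n]
  simp only [map_add, map_mul, map_natCast, map_one, map_ofNat, Nat.cast_add, Nat.cast_one]
  ring

theorem eval_iterate_derivative_X_sub_C_pow_mul (n : ℕ) (a : R) (q : R[X]) :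
    (derivative^[n] ((X - C a) ^ n * q)).eval a = n ! * q.eval a := by
  induction n generalizing q with
  | zero => simp
  | succ n ih =>
    have h : derivative ((X - C a) ^ (n + 1) * q)
        = C ((n : R) + 1) * ((X - C a) ^ n * q) + (X - C a) ^ n * ((X - C a) * derivative q) := by
      rw [derivative_mul, derivative_pow, derivative_sub, derivative_X, derivative_C]
      simp only [map_add, map_natCast, map_one, Nat.cast_add, Nat.cast_one, Nat.add_sub_cancel]
      ring
    rw [Function.iterate_succ_apply, h, iterate_map_add, iterate_derivative_C_mul, eval_add,
      eval_mul, eval_C, ih, ih]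
    simp only [eval_mul, eval_sub, eval_X, eval_C, sub_self, zero_mul, Nat.factorial_succ,
      Nat.cast_mul, Nat.cast_add, Nat.cast_one]
    ring

/-- Legendre's equation is the case `a = 2`, `μ = l(l+1)`. -/
def IsLegendreTypeSolution (a μ : R) (y : R[X]) : Prop :=
  (1 - X ^ 2) * derivative (derivative y) = C a * X * derivative y - C μ * y

namespace IsLegendreTypeSolution

variable {a μ : R} {y : R[X]}

theorem C_mul (h : IsLegendreTypeSolution a μ y) (c : R) :
    IsLegendreTypeSolution a μ (C c * y) := by
  unfold IsLegendreTypeSolution at h ⊢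
  simp only [derivative_C_mul]
  linear_combination C c * h

theorem derivative (h : IsLegendreTypeSolution a μ y) :
    IsLegendreTypeSolution (a + 2) (μ - a) (derivative y) := by
  unfold IsLegendreTypeSolution at h ⊢
  have h' := congrArg Polynomial.derivative h
  simp only [derivative_mul, derivative_sub, derivative_one, derivative_X_pow, derivative_X,
    derivative_C, Nat.cast_ofNat, map_ofNat] at h'
  simp only [map_add, map_sub, map_ofNat]
  linear_combination h'

theorem mul_eval_derivative (h : IsLegendreTypeSolution a μ y) {x : R} (hx : x ^ 2 = 1) :
    a * x * (Polynomial.derivative y).eval x = μ * y.eval x := by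
  have h' := congrArg (eval x) h
  simp only [eval_mul, eval_sub, eval_one, eval_pow, eval_X, eval_C, hx] at h'
  linear_combination -h'

end IsLegendreTypeSolution

theorem isLegendreTypeSolution_iterate_derivative_X_sq_sub_one_pow (l : ℕ) :
    IsLegendreTypeSolution 2 ((l : R) * (l + 1)) (derivative^[l] ((X ^ 2 - 1 : R[X]) ^ l)) := by
  rw [IsLegendreTypeSolution, ← Function.iterate_succ_apply' derivative,
    ← Function.iterate_succ_apply' derivative]
  cases l with
  | zero => simp [iterate_derivative_one]
  | succ m =>
    set u : R[X] := (X ^ 2 - 1) ^ (m + 1)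
    have hu : (X ^ 2 - 1) * derivative u = C (2 * ((m : R) + 1)) * (X * u) := by
      simp only [u, derivative_pow, derivative_sub, derivative_X, derivative_one,
        Nat.add_sub_cancel, map_mul, map_add, map_natCast, map_one, map_ofNat]
      push_cast
      ring
    have key := congrArg (derivative^[m + 2]) hu
    simp only [iterate_derivative_X_sq_sub_one_mul, iterate_derivative_C_mul,
      iterate_derivative_succ_X_mul (m + 1), ← Function.iterate_succ_apply] at key
    simp only [Nat.succ_eq_add_one, map_mul, map_add, map_natCast, map_one, map_ofNat,
      Nat.cast_add, Nat.cast_one] at key ⊢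
    linear_combination -key

end CommRing

theorem le_max_of_mul_deriv_nonneg {f : ℝ → ℝ} (hf : Differentiable ℝ f)
    (h : ∀ t, 0 ≤ t * deriv f t) {x : ℝ} (hx : x ∈ Icc (-1) 1) :
    f x ≤ max (f 1) (f (-1)) := by
  rcases le_total 0 x with h0 | h0
  · have hmono : MonotoneOn f (Icc 0 1) :=
      monotoneOn_of_deriv_nonneg (convex_Icc 0 1) hf.continuous.continuousOn
        hf.differentiableOn fun t ht ↦ by
          rw [interior_Icc] at ht; exact nonneg_of_mul_nonneg_right (h t) ht.1
    exact le_max_of_le_left (hmono ⟨h0, hx.2⟩ ⟨zero_le_one, le_rfl⟩ hx.2)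
  · have hanti : AntitoneOn f (Icc (-1) 0) :=
      antitoneOn_of_deriv_nonpos (convex_Icc (-1) 0) hf.continuous.continuousOn
        hf.differentiableOn fun t ht ↦ by
          rw [interior_Icc] at ht; exact nonpos_of_mul_nonneg_right (h t) ht.2
    exact le_max_of_le_right (hanti ⟨le_rfl, by norm_num⟩ ⟨hx.1, h0⟩ hx.1)

theorem IsLegendreTypeSolution.abs_eval_le_max {a μ : ℝ} {y : ℝ[X]}
    (h : IsLegendreTypeSolution a μ y) (ha : 1 ≤ a) (hμ : 0 < μ) {x : ℝ} (hx : x ∈ Icc (-1) 1) :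
    |y.eval x| ≤ max |y.eval 1| |y.eval (-1)| := by
  unfold IsLegendreTypeSolution at h
  set y' := Polynomial.derivative y
  set F : ℝ[X] := C μ * y ^ 2 + (1 - X ^ 2) * y' ^ 2
  have hF : Polynomial.derivative F = C (2 * (a - 1)) * X * y' ^ 2 := by
    simp only [F, derivative_add, derivative_mul, derivative_pow, derivative_one,
      derivative_X, derivative_C, Nat.cast_ofNat, map_mul, map_sub, map_ofNat, map_one]
    linear_combination (2 * y') * h
  have hmax : F.eval x ≤ max (F.eval 1) (F.eval (-1)) :=
    le_max_of_mul_deriv_nonneg F.differentiable (fun t ↦ by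
      rw [Polynomial.deriv, hF]
      simp only [eval_mul, eval_C, eval_X, eval_pow]
      have : 0 ≤ a - 1 := by linarith
      nlinarith [mul_nonneg this (sq_nonneg (t * y'.eval t))]) hx
  have hFx : μ * y.eval x ^ 2 ≤ F.eval x := by
    have : 0 ≤ 1 - x ^ 2 := by nlinarith [hx.1, hx.2]
    simp only [F, eval_add, eval_mul, eval_C, eval_pow, eval_sub, eval_one, eval_X]
    nlinarith [mul_nonneg this (sq_nonneg (y'.eval x))]
  have hend : ∀ t : ℝ, t ^ 2 = 1 → F.eval t = μ * y.eval t ^ 2 := fun t ht ↦ by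
    simp [F, ht]
  rw [hend 1 (one_pow 2), hend (-1) (by norm_num), ← mul_max_of_nonneg _ _ hμ.le] at hmax
  rcases le_max_iff.1 (le_of_mul_le_mul_left (hFx.trans hmax) hμ) with h1 | h1
  · exact le_max_of_le_left (sq_le_sq.1 h1)
  · exact le_max_of_le_right (sq_le_sq.1 h1)

noncomputable def legendre (l : ℕ) : ℝ[X] :=
  C (1 / (2 ^ l * l ! : ℝ)) * derivative^[l] ((X ^ 2 - 1) ^ l)

theorem iteratedDeriv_polynomial_eval {𝕜 : Type*} [NontriviallyNormedField 𝕜] (n : ℕ)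
    (p : 𝕜[X]) : iteratedDeriv n (fun t ↦ p.eval t) = fun t ↦ (derivative^[n] p).eval t := by
  induction n with
  | zero => simp
  | succ n ih =>
    ext t
    rw [iteratedDeriv_succ, ih, Function.iterate_succ_apply', Polynomial.deriv]

theorem legendreP_eq_eval (l : ℕ) (x : ℝ) : legendreP l x = (legendre l).eval x := by
  rw [legendreP, legendre, eval_mul, eval_C, ← congrFun (iteratedDeriv_polynomial_eval l _) x]
  simp

theorem legendre_zero : legendre 0 = 1 := by
  simp [legendre]

theorem legendre_one : legendre 1 = X := by
  simp [legendre, one_add_one_eq_two, ← mul_assoc, ← C_mul]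

theorem isLegendreTypeSolution_legendre (l : ℕ) :
    IsLegendreTypeSolution 2 ((l : ℝ) * (l + 1)) (legendre l) :=
  (isLegendreTypeSolution_iterate_derivative_X_sq_sub_one_pow l).C_mul _

theorem legendre_eval_one (l : ℕ) : (legendre l).eval 1 = 1 := by
  rw [legendre, eval_mul, eval_C, show (X ^ 2 - 1 : ℝ[X]) = (X - C 1) * (X + 1) by simp; ring,
    mul_pow, eval_iterate_derivative_X_sub_C_pow_mul]
  norm_num
  field_simp

theorem legendre_eval_neg_one (l : ℕ) : (legendre l).eval (-1) = (-1) ^ l := by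
  rw [legendre, eval_mul, eval_C, show (X ^ 2 - 1 : ℝ[X]) = (X - C (-1)) * (X - 1) by simp; ring,
    mul_pow, eval_iterate_derivative_X_sub_C_pow_mul]
  norm_num
  field_simp
  rw [← mul_pow]
  norm_num

theorem abs_eval_legendre_le_one (l : ℕ) {x : ℝ} (hx : x ∈ Icc (-1) 1) :
    |(legendre l).eval x| ≤ 1 := by
  rcases Nat.eq_zero_or_pos l with rfl | hl
  · simp [legendre_zero]
  · have hμ : (0 : ℝ) < l * (l + 1) := by positivity
    simpa [legendre_eval_one, legendre_eval_neg_one] using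
      (isLegendreTypeSolution_legendre l).abs_eval_le_max one_le_two hμ hx

theorem abs_eval_derivative_legendre_of_sq_eq_one (l : ℕ) {x : ℝ} (hx : x ^ 2 = 1) :
    |(derivative (legendre l)).eval x| = l * (l + 1) / 2 := by
  have h := congrArg abs ((isLegendreTypeSolution_legendre l).mul_eval_derivative hx)
  have hl : |(l : ℝ) + 1| = l + 1 := abs_of_nonneg (by positivity)
  rcases sq_eq_one_iff.1 hx with rfl | rfl <;>
  · simp only [abs_mul, legendre_eval_one, legendre_eval_neg_one, abs_pow, abs_neg, abs_one,
      one_pow, mul_one, abs_two, Nat.abs_cast, hl] at h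
    linarith

theorem abs_eval_derivative_legendre_le (l : ℕ) {x : ℝ} (hx : x ∈ Icc (-1) 1) :
    |(derivative (legendre l)).eval x| ≤ l * (l + 1) / 2 := by
  match l with
  | 0 => simp [legendre_zero]
  | 1 => norm_num [legendre_one]
  | l + 2 =>
    have hμ : (0 : ℝ) < (↑(l + 2) : ℝ) * (↑(l + 2) + 1) - 2 := by push_cast; nlinarith
    have h := (isLegendreTypeSolution_legendre (l + 2)).derivative.abs_eval_le_max
      (by norm_num) hμ hx
    rwa [abs_eval_derivative_legendre_of_sq_eq_one _ (one_pow 2),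
      abs_eval_derivative_legendre_of_sq_eq_one (x := -1) _ (by norm_num), max_self] at h

theorem abs_one_sub_eval_legendre_le (l : ℕ) {x : ℝ} (hx : x ∈ Icc (-1) 1) :
    |1 - (legendre l).eval x| ≤ l * (l + 1) / 2 * (1 - x) := by
  have h := norm_image_sub_le_of_norm_deriv_le_segment' (f := fun t ↦ (legendre l).eval t)
    (f' := fun t ↦ (derivative (legendre l)).eval t)
    (fun t _ ↦ ((legendre l).hasDerivAt t).hasDerivWithinAt)
    (fun t ht ↦ abs_eval_derivative_legendre_le l ⟨hx.1.trans ht.1, ht.2.le⟩) 1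
    (right_mem_Icc.2 hx.2)
  simpa [legendre_eval_one] using h

theorem le_mul_rpow_of_le_of_le_mul {a c t γ : ℝ} (hc : 0 ≤ c) (ht : 0 ≤ t)
    (hγ₀ : 0 ≤ γ) (hγ₁ : γ ≤ 1) (h₁ : a ≤ c) (h₂ : a ≤ c * t) : a ≤ c * t ^ γ := by
  rcases le_total 1 t with h | h
  · exact h₁.trans (le_mul_of_one_le_right hc (one_le_rpow h hγ₀))
  · exact h₂.trans (mul_le_mul_of_nonneg_left (self_le_rpow_of_le_one ht h hγ₁) hc)

/-- the interpolation bound `|1 − P_l(x)| ≤ 2 |1 − x|^γ (l(l+1))^γ`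
for `γ ∈ [0,1]` and `x ∈ [−1,1]`. -/
theorem stmt_13 (l : ℕ) (γ : ℝ) (hγ : γ ∈ Set.Icc (0:ℝ) 1)
    (x : ℝ) (hx : x ∈ Set.Icc (-1:ℝ) 1) :
    |1 - legendreP l x| ≤ 2 * |1 - x|^γ * ((l:ℝ)*((l:ℝ)+1))^γ := by
  have hl : 0 ≤ (l : ℝ) * (l + 1) := by positivity
  have h1x : 0 ≤ 1 - x := sub_nonneg.2 hx.2
  rw [legendreP_eq_eval, abs_of_nonneg h1x, mul_assoc, ← mul_rpow h1x hl]
  refine le_mul_rpow_of_le_of_le_mul zero_le_two (mul_nonneg h1x hl) hγ.1 hγ.2 ?_ ?_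
  · calc |1 - (legendre l).eval x| ≤ |1| + |(legendre l).eval x| := abs_sub _ _
      _ ≤ 2 := by linarith [abs_eval_legendre_le_one l hx, abs_one (α := ℝ)]
  · calc |1 - (legendre l).eval x| ≤ l * (l + 1) / 2 * (1 - x) :=
          abs_one_sub_eval_legendre_le l hx
      _ ≤ 2 * ((1 - x) * (l * (l + 1))) := by nlinarith [mul_nonneg h1x hl]
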